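/- For every t > 0 and all sign vectors ε, ε' : Fin 3 → ℝ (values in {-1,1}) differing in exactly one coordinate: ⟨P t ε, P t ε'⟩ = -(1 + 1/t²) = -√(⟨P t ε, P t ε⟩·⟨P t ε', P t ε'⟩) and ⟨N t ε, N t ε'⟩ = -(1 + t²) = -√(⟨N t ε, N t ε⟩·⟨N t ε', N t ε'⟩). (Hence these pairs of hyperplanes, tangent at infinity in the 24-cell, remain tangent at infinity throughout the whole deformation, as asserted in Proposition 6.2.) -/
import Mathlib


/-- The Minkowski inner product on `ℝ^{1,4}`, identified with `Fin 5 → ℝ`. -/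
noncomputable def mink (v w : Fin 5 → ℝ) : ℝ :=
  -(v 0 * w 0) + v 1 * w 1 + v 2 * w 2 + v 3 * w 3 + v 4 * w 4

/-- The positive octet space-like vectors of the deformed 24-cell (Table 6.1). -/
noncomputable def Pvec (t : ℝ) (ε : Fin 3 → ℝ) : Fin 5 → ℝ :=
  ![Real.sqrt 2, ε 0, ε 1, ε 2, (ε 0 * ε 1 * ε 2) / t]

/-- The negative octet space-like vectors of the deformed 24-cell (Table 6.1). -/
noncomputable def Nvec (t : ℝ) (ε : Fin 3 → ℝ) : Fin 5 → ℝ :=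
  ![Real.sqrt 2, ε 0, ε 1, ε 2, -((ε 0 * ε 1 * ε 2) * t)]

/-- Pairs of positive (resp. negative) octet wall vectors whose sign vectors differ in
exactly one coordinate remain tangent at infinity throughout the deformation:
`⟨q,q'⟩ = -√(⟨q,q⟩⟨q',q'⟩)`. -/
theorem tangent_pairs_stay_tangent (t : ℝ) (ht : 0 < t)
    (ε ε' : Fin 3 → ℝ) (hε : ∀ i, ε i = -1 ∨ ε i = 1) (hε' : ∀ i, ε' i = -1 ∨ ε' i = 1)
    (hd : Nat.card {i : Fin 3 // ε i ≠ ε' i} = 1) :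
    mink (Pvec t ε) (Pvec t ε') = -(1 + 1 / t ^ 2) ∧
    -(1 + 1 / t ^ 2) =
      -Real.sqrt (mink (Pvec t ε) (Pvec t ε) * mink (Pvec t ε') (Pvec t ε')) ∧
    mink (Nvec t ε) (Nvec t ε') = -(1 + t ^ 2) ∧
    -(1 + t ^ 2) =
      -Real.sqrt (mink (Nvec t ε) (Nvec t ε) * mink (Nvec t ε') (Nvec t ε')) := by

  have ht0 : t ≠ 0 := ne_of_gt ht
  have h2 : Real.sqrt 2 * Real.sqrt 2 = 2 := Real.mul_self_sqrt (by norm_num)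
  obtain ⟨⟨j, hj⟩, hu⟩ := Nat.card_eq_one_iff_exists.mp hd
  have hne : ε j * ε' j = -1 := by
    rcases hε j with h | h <;> rcases hε' j with h' | h' <;>
      simp [h, h'] at hj ⊢ <;> norm_num
  have heq : ∀ i, i ≠ j → ε i * ε' i = 1 := by
    intro i hi
    have : ε i = ε' i := by
      by_contra hc
      exact hi (congrArg Subtype.val (hu ⟨i, hc⟩))
    rw [← this]
    rcases hε i with h | h <;> rw [h] <;> norm_num
  have key : ε 0 * ε' 0 + ε 1 * ε' 1 + ε 2 * ε' 2 = 1 ∧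
      (ε 0 * ε 1 * ε 2) * (ε' 0 * ε' 1 * ε' 2) = -1 := by
    fin_cases j
    · have hne0 : ε 0 * ε' 0 = -1 := hne
      have h1 := heq 1 (by decide)
      have h2 := heq 2 (by decide)
      constructor
      · linarith
      · linear_combination (ε 1 * ε' 1 * ε 2 * ε' 2) * hne0 +
          (-(ε 2 * ε' 2)) * h1 + (-1 : ℝ) * h2
    · have hne0 : ε 1 * ε' 1 = -1 := hne
      have h1 := heq 0 (by decide)
      have h2 := heq 2 (by decide)
      constructor
      · linarith
      · linear_combination (ε 0 * ε' 0 * ε 2 * ε' 2) * hne0 +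
          (-(ε 2 * ε' 2)) * h1 + (-1 : ℝ) * h2
    · have hne0 : ε 2 * ε' 2 = -1 := hne
      have h1 := heq 0 (by decide)
      have h2 := heq 1 (by decide)
      constructor
      · linarith
      · linear_combination (ε 0 * ε' 0 * ε 1 * ε' 1) * hne0 +
          (-(ε 1 * ε' 1)) * h1 + (-1 : ℝ) * h2
  obtain ⟨hsum, hprod⟩ := key
  have hsq : ∀ i, ε i * ε i = 1 := by
    intro i; rcases hε i with h | h <;> rw [h] <;> norm_num
  have hsq' : ∀ i, ε' i * ε' i = 1 := by
    intro i; rcases hε' i with h | h <;> rw [h] <;> norm_num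
  have hsqp : (ε 0 * ε 1 * ε 2) * (ε 0 * ε 1 * ε 2) = 1 := by
    linear_combination (ε 1 * ε 1 * ε 2 * ε 2) * hsq 0 + (ε 2 * ε 2) * hsq 1 + hsq 2
  have hsqp' : (ε' 0 * ε' 1 * ε' 2) * (ε' 0 * ε' 1 * ε' 2) = 1 := by
    linear_combination (ε' 1 * ε' 1 * ε' 2 * ε' 2) * hsq' 0 + (ε' 2 * ε' 2) * hsq' 1 + hsq' 2
  have selfP : mink (Pvec t ε) (Pvec t ε) = 1 + 1 / t ^ 2 := by
    simp only [mink, Pvec, Matrix.cons_val_zero, Matrix.cons_val_one, Matrix.head_cons,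
      Matrix.cons_val_two, Matrix.tail_cons, Matrix.cons_val_three, Matrix.cons_val_four]
    rw [h2]
    have et : (1:ℝ) / t ^ 2 = (ε 0 * ε 1 * ε 2) / t * ((ε 0 * ε 1 * ε 2) / t) := by
      rw [div_mul_div_comm, hsqp]; ring
    rw [et]
    linear_combination hsq 0 + hsq 1 + hsq 2
  have selfP' : mink (Pvec t ε') (Pvec t ε') = 1 + 1 / t ^ 2 := by
    simp only [mink, Pvec, Matrix.cons_val_zero, Matrix.cons_val_one, Matrix.head_cons,
      Matrix.cons_val_two, Matrix.tail_cons, Matrix.cons_val_three, Matrix.cons_val_four]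
    rw [h2]
    have et : (1:ℝ) / t ^ 2 = (ε' 0 * ε' 1 * ε' 2) / t * ((ε' 0 * ε' 1 * ε' 2) / t) := by
      rw [div_mul_div_comm, hsqp']; ring
    rw [et]
    linear_combination hsq' 0 + hsq' 1 + hsq' 2
  have selfN : mink (Nvec t ε) (Nvec t ε) = 1 + t ^ 2 := by
    simp only [mink, Nvec, Matrix.cons_val_zero, Matrix.cons_val_one, Matrix.head_cons,
      Matrix.cons_val_two, Matrix.tail_cons, Matrix.cons_val_three, Matrix.cons_val_four]
    rw [h2]
    linear_combination hsq 0 + hsq 1 + hsq 2 + t ^ 2 * hsqp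
  have selfN' : mink (Nvec t ε') (Nvec t ε') = 1 + t ^ 2 := by
    simp only [mink, Nvec, Matrix.cons_val_zero, Matrix.cons_val_one, Matrix.head_cons,
      Matrix.cons_val_two, Matrix.tail_cons, Matrix.cons_val_three, Matrix.cons_val_four]
    rw [h2]
    linear_combination hsq' 0 + hsq' 1 + hsq' 2 + t ^ 2 * hsqp'
  have hposP : (0:ℝ) ≤ 1 + 1 / t ^ 2 := by positivity
  have hposN : (0:ℝ) ≤ 1 + t ^ 2 := by positivity
  refine ⟨?_, ?_, ?_, ?_⟩
  · simp only [mink, Pvec, Matrix.cons_val_zero, Matrix.cons_val_one, Matrix.head_cons,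
      Matrix.cons_val_two, Matrix.tail_cons, Matrix.cons_val_three, Matrix.cons_val_four]
    rw [h2]
    have et : (ε 0 * ε 1 * ε 2) / t * ((ε' 0 * ε' 1 * ε' 2) / t) = -(1 / t ^ 2) := by
      rw [div_mul_div_comm, hprod]; ring
    rw [et]
    linear_combination hsum
  · rw [selfP, selfP', Real.sqrt_mul_self hposP]
  · simp only [mink, Nvec, Matrix.cons_val_zero, Matrix.cons_val_one, Matrix.head_cons,
      Matrix.cons_val_two, Matrix.tail_cons, Matrix.cons_val_three, Matrix.cons_val_four]
    rw [h2]
    linear_combination hsum + t ^ 2 * hprod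
  · rw [selfN, selfN', Real.sqrt_mul_self hposN]
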